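/- arXiv:1307.2790 — 2 statements merged into one kernel-verified Lean document; each statement's English description precedes it below -/
import Mathlib

section
/- (Feasibility of the N-QP) For every x ∈ X₀ and every integer N ≥ 1, the auxiliary control sequence u(τ) := K x(τ), τ = 0,…,N−1, where x(0) = x and x(τ+1) = Ā x(τ), is a feasible sequence for the N-QP at x; in particular, the feasible set of the N-QP at every x ∈ X₀ is nonempty. -/
open Matrix Finset Filter Topology

/-- The smallest eigenvalue of a (symmetric) real matrix. -/
noncomputable def lamMin {n : ℕ} (R : Matrix (Fin n) (Fin n) ℝ) : ℝ :=
  if h : R.IsHermitian then ⨅ i, h.eigenvalues i else 0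

/-- The largest eigenvalue of a (symmetric) real matrix. -/
noncomputable def lamMax {n : ℕ} (R : Matrix (Fin n) (Fin n) ℝ) : ℝ :=
  if h : R.IsHermitian then ⨆ i, h.eigenvalues i else 0

/-- The quadratic form `xᵀ R x`. -/
noncomputable def qf {p : ℕ} (R : Matrix (Fin p) (Fin p) ℝ) (x : Fin p → ℝ) : ℝ :=
  x ⬝ᵥ R.mulVec x

/-- λ := 1 − λ_min(Q̄)/λ_max(P̄). -/
noncomputable def lamParam {n : ℕ} (Qb Pb : Matrix (Fin n) (Fin n) ℝ) : ℝ :=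
  1 - lamMin Qb / lamMax Pb

/-- φ_N := (λ_max(P̄)·λ_max(P + KᵀQK)/λ_min(P̄))·(1 − λ^{N+1})/(1 − λ). -/
noncomputable def phi {n m : ℕ} (Qb Pb P : Matrix (Fin n) (Fin n) ℝ)
    (Q : Matrix (Fin m) (Fin m) ℝ) (K : Matrix (Fin m) (Fin n) ℝ) (N : ℕ) : ℝ :=
  (lamMax Pb * lamMax (P + Kᵀ * Q * K) / lamMin Pb) *
    ((1 - lamParam Qb Pb ^ (N + 1)) / (1 - lamParam Qb Pb))

/-- φ_∞ := λ_max(P̄)·λ_max(P + KᵀQK)/(λ_min(P̄)·(1 − λ)). -/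
noncomputable def phiInf {n m : ℕ} (Qb Pb P : Matrix (Fin n) (Fin n) ℝ)
    (Q : Matrix (Fin m) (Fin m) ℝ) (K : Matrix (Fin m) (Fin n) ℝ) : ℝ :=
  lamMax Pb * lamMax (P + Kᵀ * Q * K) / (lamMin Pb * (1 - lamParam Qb Pb))

/-- ψ := λ_max(KᵀQK + ĀᵀPĀ)/λ_min(P). -/
noncomputable def psiC {n m : ℕ} (P Abar : Matrix (Fin n) (Fin n) ℝ)
    (Q : Matrix (Fin m) (Fin m) ℝ) (K : Matrix (Fin m) (Fin n) ℝ) : ℝ :=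
  lamMax (Kᵀ * Q * K + Abarᵀ * P * Abar) / lamMin P

/-- χ := 1 − λ_min(P)/φ_∞. -/
noncomputable def chiC {n m : ℕ} (Qb Pb P : Matrix (Fin n) (Fin n) ℝ)
    (Q : Matrix (Fin m) (Fin m) ℝ) (K : Matrix (Fin m) (Fin n) ℝ) : ℝ :=
  1 - lamMin P / phiInf Qb Pb P Q K

/-- α_N := (λ_max(KᵀQK + ĀᵀPĀ)/λ_min(P))·∏_{κ=0}^{N−1}(1 − λ_min(P)/φ_{κ+1}). -/
noncomputable def alphaC {n m : ℕ} (Qb Pb P Abar : Matrix (Fin n) (Fin n) ℝ)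
    (Q : Matrix (Fin m) (Fin m) ℝ) (K : Matrix (Fin m) (Fin n) ℝ) (N : ℕ) : ℝ :=
  psiC P Abar Q K * ∏ κ ∈ Finset.range N, (1 - lamMin P / phi Qb Pb P Q K (κ + 1))

/-- γ_{N,S} := (1 − λ_min(P)/φ_∞)·max{1 + α_{N−S−1}, (1 + α_{N−1})·∏_{ℓ=N−S}^{N−1}(1 + α_ℓ)}. -/
noncomputable def gammaNS {n m : ℕ} (Qb Pb P Abar : Matrix (Fin n) (Fin n) ℝ)
    (Q : Matrix (Fin m) (Fin m) ℝ) (K : Matrix (Fin m) (Fin n) ℝ) (N S : ℕ) : ℝ :=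
  (1 - lamMin P / phiInf Qb Pb P Q K) *
    max (1 + alphaC Qb Pb P Abar Q K (N - S - 1))
      ((1 + alphaC Qb Pb P Abar Q K (N - 1)) *
        ∏ ℓ ∈ Finset.Ico (N - S) N, (1 + alphaC Qb Pb P Abar Q K ℓ))

/-- The trajectory of `x(τ+1) = A x(τ) + B u(τ)` from `x0` under the control sequence `u`. -/
def traj {n m : ℕ} (A : Matrix (Fin n) (Fin n) ℝ) (B : Matrix (Fin n) (Fin m) ℝ)
    (x0 : Fin n → ℝ) (u : ℕ → Fin m → ℝ) : ℕ → Fin n → ℝ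
  | 0 => x0
  | τ + 1 => A *ᵥ traj A B x0 u τ + B *ᵥ u τ

/-- Feasibility of a control sequence `u(0),…,u(N−1)` for the `N`-QP at `x`. -/
def Feasible {n m : ℕ} (A : Matrix (Fin n) (Fin n) ℝ) (B : Matrix (Fin n) (Fin m) ℝ)
    (X0 : Set (Fin n → ℝ)) (U : Set (Fin m → ℝ)) (N : ℕ) (x : Fin n → ℝ)
    (u : ℕ → Fin m → ℝ) : Prop :=
  (∀ τ < N, u τ ∈ U) ∧ (∀ τ < N, traj A B x u (τ + 1) ∈ X0)

/-- The cost `Σ_{τ=0}^{N−1}(x(τ)ᵀPx(τ) + u(τ)ᵀQu(τ)) + x(N)ᵀPx(N)` of the `N`-QP. -/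
noncomputable def cost {n m : ℕ} (A : Matrix (Fin n) (Fin n) ℝ) (B : Matrix (Fin n) (Fin m) ℝ)
    (P : Matrix (Fin n) (Fin n) ℝ) (Q : Matrix (Fin m) (Fin m) ℝ) (N : ℕ)
    (x : Fin n → ℝ) (u : ℕ → Fin m → ℝ) : ℝ :=
  (∑ τ ∈ Finset.range N, (qf P (traj A B x u τ) + qf Q (u τ))) + qf P (traj A B x u N)

/-- `V_N(x)`: the optimal value of the `N`-QP at `x`. -/
noncomputable def Vopt {n m : ℕ} (A : Matrix (Fin n) (Fin n) ℝ) (B : Matrix (Fin n) (Fin m) ℝ)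
    (P : Matrix (Fin n) (Fin n) ℝ) (Q : Matrix (Fin m) (Fin m) ℝ)
    (X0 : Set (Fin n → ℝ)) (U : Set (Fin m → ℝ)) (N : ℕ) (x : Fin n → ℝ) : ℝ :=
  sInf (cost A B P Q N x '' {u | Feasible A B X0 U N x u})

/-! The Lyapunov equation makes `W x = xᵀ P̄ x` nonincreasing along `x ↦ Ā x`, so the sublevel
set `X₀` is `Ā`-invariant: the closed-loop trajectory stays in `X₀ ⊆ X`, where `K` maps into `U`. -/

section FeedbackInvariance

variable {n m : ℕ}

theorem qf_mulVec (P M : Matrix (Fin n) (Fin n) ℝ) (y : Fin n → ℝ) :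
    qf P (M *ᵥ y) = qf (Mᵀ * P * M) y := by
  simp only [qf, ← mulVec_mulVec, dotProduct_mulVec, vecMul_transpose]

theorem qf_mulVec_le_of_lyapunov {P Q M : Matrix (Fin n) (Fin n) ℝ}
    (hQ : Q.PosSemidef) (hLyap : Mᵀ * P * M - P = -Q) (y : Fin n → ℝ) :
    qf P (M *ᵥ y) ≤ qf P y := by
  have hQy : 0 ≤ qf Q y := by simpa [qf] using hQ.dotProduct_mulVec_nonneg y
  calc qf P (M *ᵥ y) = qf (P - Q) y := by
        rw [qf_mulVec, sub_eq_add_neg, ← hLyap, add_sub_cancel]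
    _ = qf P y - qf Q y := by simp only [qf, sub_mulVec, dotProduct_sub]
    _ ≤ qf P y := by linarith

theorem pow_mulVec_mem_of_mapsTo {ι R : Type*} [Fintype ι] [DecidableEq ι] [Semiring R]
    {M : Matrix ι ι R} {S : Set (ι → R)} (hS : Set.MapsTo (M *ᵥ ·) S S) {x : ι → R} (hx : x ∈ S) (τ : ℕ) :
    M ^ τ *ᵥ x ∈ S := by
  induction τ with
  | zero => simpa using hx
  | succ τ ih => simpa [pow_succ', ← mulVec_mulVec] using hS ih

theorem traj_feedback (A : Matrix (Fin n) (Fin n) ℝ) (B : Matrix (Fin n) (Fin m) ℝ)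
    (K : Matrix (Fin m) (Fin n) ℝ) (x : Fin n → ℝ) (τ : ℕ) :
    traj A B x (fun τ => K *ᵥ ((A + B * K) ^ τ *ᵥ x)) τ = (A + B * K) ^ τ *ᵥ x := by
  induction τ with
  | zero => simp [traj]
  | succ τ ih =>
    rw [traj, ih, pow_succ', ← mulVec_mulVec, add_mulVec, ← mulVec_mulVec _ B K]

theorem feasible_feedback_of_mapsTo {A : Matrix (Fin n) (Fin n) ℝ} {B : Matrix (Fin n) (Fin m) ℝ}
    {K : Matrix (Fin m) (Fin n) ℝ} {X0 : Set (Fin n → ℝ)} {U : Set (Fin m → ℝ)}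
    (hinv : Set.MapsTo ((A + B * K) *ᵥ ·) X0 X0) (hKU : Set.MapsTo (K *ᵥ ·) X0 U)
    {x : Fin n → ℝ} (hx : x ∈ X0) (N : ℕ) :
    Feasible A B X0 U N x (fun τ => K *ᵥ ((A + B * K) ^ τ *ᵥ x)) :=
  ⟨fun τ _ => hKU (pow_mulVec_mem_of_mapsTo hinv hx τ),
    fun τ _ => traj_feedback A B K x (τ + 1) ▸ pow_mulVec_mem_of_mapsTo hinv hx (τ + 1)⟩

end FeedbackInvariance

theorem stmt3_general {n m : ℕ}
    (A : Matrix (Fin n) (Fin n) ℝ) (B : Matrix (Fin n) (Fin m) ℝ)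
    (K : Matrix (Fin m) (Fin n) ℝ) (Qb Pb : Matrix (Fin n) (Fin n) ℝ)
    (hQb : Qb.PosDef)
    (hLyap : (A + B * K)ᵀ * Pb * (A + B * K) - Pb = -Qb)
    (c : ℝ)
    (X0 : Set (Fin n → ℝ)) (hX0 : X0 = {x : Fin n → ℝ | qf Pb x ≤ c})
    (X : Set (Fin n → ℝ)) (U : Set (Fin m → ℝ))
    (hX0X : X0 ⊆ X) (hKU : ∀ x ∈ X, K *ᵥ x ∈ U)
    :
    ∀ x ∈ X0, ∀ N : ℕ, 1 ≤ N →
      Feasible A B X0 U N x (fun τ => K *ᵥ ((A + B * K) ^ τ *ᵥ x)) ∧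
      ∃ u : ℕ → Fin m → ℝ, Feasible A B X0 U N x u := by
  intro x hx N _
  have hinv : Set.MapsTo ((A + B * K) *ᵥ ·) X0 X0 := by
    subst hX0
    exact fun y hy => (qf_mulVec_le_of_lyapunov hQb.posSemidef hLyap y).trans hy
  have hfeas := feasible_feedback_of_mapsTo hinv (fun y hy => hKU _ (hX0X hy)) hx N
  exact ⟨hfeas, _, hfeas⟩

/-- Feasibility of the N-QP: for every `x ∈ X₀` and `N ≥ 1`, the auxiliary
control sequence `u(τ) := K x(τ)` with `x(0) = x`, `x(τ+1) = Ā x(τ)` (i.e. `x(τ) = Āᵗ x`)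
is feasible for the `N`-QP at `x`; in particular the feasible set is nonempty. -/
theorem stmt3 {n m : ℕ}
    (A : Matrix (Fin n) (Fin n) ℝ) (B : Matrix (Fin n) (Fin m) ℝ)
    (K : Matrix (Fin m) (Fin n) ℝ) (Qb Pb : Matrix (Fin n) (Fin n) ℝ)
    (hQb : Qb.PosDef) (hPb : Pb.PosDef)
    (hLyap : (A + B * K)ᵀ * Pb * (A + B * K) - Pb = -Qb)
    (c : ℝ) (hc : 0 < c)
    (X0 : Set (Fin n → ℝ)) (hX0 : X0 = {x : Fin n → ℝ | qf Pb x ≤ c})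
    (X : Set (Fin n → ℝ)) (U : Set (Fin m → ℝ))
    (hX : Convex ℝ X) (hU : Convex ℝ U)
    (h0X : (0 : Fin n → ℝ) ∈ X) (h0U : (0 : Fin m → ℝ) ∈ U)
    (hX0X : X0 ⊆ X) (hKU : ∀ x ∈ X, K *ᵥ x ∈ U)
    :
    ∀ x ∈ X0, ∀ N : ℕ, 1 ≤ N →
      Feasible A B X0 U N x (fun τ => K *ᵥ ((A + B * K) ^ τ *ᵥ x)) ∧
      ∃ u : ℕ → Fin m → ℝ, Feasible A B X0 U N x u :=
  stmt3_general A B K Qb Pb hQb hLyap c X0 hX0 X U hX0X hKU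
end

section
/- (Positive-definite and decrescent properties of V_N) For every integer N ≥ 1 and every x ∈ X₀, the optimal value of the N-QP satisfies λ_min(P)·‖x‖² ≤ V_N(x) ≤ φ_N·‖x‖². -/
open Matrix Finset Filter Topology

/-!
Along the closed loop `x(τ) = Ā^τ x` of the feedback `u(τ) = K x(τ)`, the Lyapunov equation gives
`W(Āz) = W(z) − zᵀQ̄z ≤ λ W(z)`. Hence `x(τ)` never leaves the sublevel set `X₀`, so the feedback is
feasible, and `‖x(τ)‖² ≤ (λ_max(P̄)/λ_min(P̄)) λ^τ ‖x‖²`. Each stage cost of the feedback is at most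
`λ_max(P + KᵀQK) ‖x(τ)‖²`, and summing the geometric series over `τ = 0, …, N` bounds `V_N(x)` by
`φ_N ‖x‖²`. Conversely, every feasible sequence costs at least its first stage
`xᵀPx ≥ λ_min(P) ‖x‖²`.
-/

section QuadraticForm

variable {p : ℕ}

lemma qf_add (R S : Matrix (Fin p) (Fin p) ℝ) (x : Fin p → ℝ) :
    qf (R + S) x = qf R x + qf S x := by
  simp only [qf, add_mulVec, dotProduct_add]

lemma qf_sub (R S : Matrix (Fin p) (Fin p) ℝ) (x : Fin p → ℝ) :
    qf (R - S) x = qf R x - qf S x := by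
  simp only [qf, sub_mulVec, dotProduct_sub]

lemma qf_transpose_mul_mul {k : ℕ} (R : Matrix (Fin k) (Fin k) ℝ) (C : Matrix (Fin k) (Fin p) ℝ)
    (x : Fin p → ℝ) : qf (Cᵀ * R * C) x = qf R (C *ᵥ x) := by
  rw [qf, qf, ← mulVec_mulVec, ← mulVec_mulVec, dotProduct_mulVec, vecMul_transpose]

lemma Matrix.PosSemidef.qf_nonneg {R : Matrix (Fin p) (Fin p) ℝ} (hR : R.PosSemidef)
    (x : Fin p → ℝ) : 0 ≤ qf R x := by
  simpa [qf] using hR.dotProduct_mulVec_nonneg x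

lemma Matrix.PosDef.qf_pos {R : Matrix (Fin p) (Fin p) ℝ} (hR : R.PosDef) {x : Fin p → ℝ}
    (hx : x ≠ 0) : 0 < qf R x := by
  simpa [qf] using hR.dotProduct_mulVec_pos hx

lemma Matrix.IsHermitian.exists_qf_eq_sum_eigenvalues {R : Matrix (Fin p) (Fin p) ℝ}
    (hR : R.IsHermitian) (x : Fin p → ℝ) :
    ∃ y : Fin p → ℝ, qf R x = ∑ i, hR.eigenvalues i * y i ^ 2 ∧ x ⬝ᵥ x = ∑ i, y i ^ 2 := by
  set V : Matrix (Fin p) (Fin p) ℝ := (hR.eigenvectorUnitary : Matrix (Fin p) (Fin p) ℝ)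
  have hVV : V * star V = 1 := (Unitary.mem_iff.mp hR.eigenvectorUnitary.2).2
  have hR_eq : R = V * diagonal hR.eigenvalues * star V := by simpa using hR.spectral_theorem
  have hstar : star V *ᵥ x = x ᵥ* V := mulVec_transpose V x
  refine ⟨x ᵥ* V, ?_, ?_⟩
  · nth_rw 1 [qf, hR_eq]
    rw [← mulVec_mulVec, ← mulVec_mulVec, hstar, dotProduct_mulVec]
    simp only [dotProduct, mulVec_diagonal]
    exact Finset.sum_congr rfl fun i _ ↦ by ring
  · calc x ⬝ᵥ x = x ⬝ᵥ (V * star V) *ᵥ x := by rw [hVV, one_mulVec]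
      _ = (x ᵥ* V) ⬝ᵥ (x ᵥ* V) := by rw [← mulVec_mulVec, dotProduct_mulVec, hstar]
      _ = ∑ i, (x ᵥ* V) i ^ 2 := by simp only [dotProduct, sq]

lemma lamMin_mul_le_qf {R : Matrix (Fin p) (Fin p) ℝ} (hR : R.IsHermitian) (x : Fin p → ℝ) :
    lamMin R * (x ⬝ᵥ x) ≤ qf R x := by
  obtain ⟨y, hqf, hdot⟩ := hR.exists_qf_eq_sum_eigenvalues x
  rw [hqf, hdot, lamMin, dif_pos hR, Finset.mul_sum]
  exact Finset.sum_le_sum fun i _ ↦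
    mul_le_mul_of_nonneg_right (ciInf_le (Set.finite_range _).bddBelow i) (sq_nonneg _)

lemma qf_le_lamMax_mul {R : Matrix (Fin p) (Fin p) ℝ} (hR : R.IsHermitian) (x : Fin p → ℝ) :
    qf R x ≤ lamMax R * (x ⬝ᵥ x) := by
  obtain ⟨y, hqf, hdot⟩ := hR.exists_qf_eq_sum_eigenvalues x
  rw [hqf, hdot, lamMax, dif_pos hR, Finset.mul_sum]
  exact Finset.sum_le_sum fun i _ ↦
    mul_le_mul_of_nonneg_right (le_ciSup (Set.finite_range _).bddAbove i) (sq_nonneg _)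

lemma lamMax_nonneg {R : Matrix (Fin p) (Fin p) ℝ} (hR : R.PosSemidef) : 0 ≤ lamMax R := by
  rw [lamMax, dif_pos hR.1]
  exact Real.iSup_nonneg hR.eigenvalues_nonneg

lemma lamMin_pos [Nonempty (Fin p)] {R : Matrix (Fin p) (Fin p) ℝ} (hR : R.PosDef) :
    0 < lamMin R := by
  rw [lamMin, dif_pos hR.1]
  obtain ⟨i, hi⟩ := exists_eq_ciInf_of_finite (f := hR.1.eigenvalues)
  exact hi ▸ hR.eigenvalues_pos i

lemma lamMax_pos [Nonempty (Fin p)] {R : Matrix (Fin p) (Fin p) ℝ} (hR : R.PosDef) :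
    0 < lamMax R := by
  rw [lamMax, dif_pos hR.1]
  obtain ⟨i, hi⟩ := exists_eq_ciSup_of_finite (f := hR.1.eigenvalues)
  exact hi ▸ hR.eigenvalues_pos i

lemma dotProduct_self_le_qf_div_lamMin [Nonempty (Fin p)] {R : Matrix (Fin p) (Fin p) ℝ}
    (hR : R.PosDef) (x : Fin p → ℝ) : x ⬝ᵥ x ≤ qf R x / lamMin R := by
  rw [le_div_iff₀ (lamMin_pos hR), mul_comm]
  exact lamMin_mul_le_qf hR.1 x

end QuadraticForm

section Lyapunov

variable {n : ℕ} {M Pb Qb : Matrix (Fin n) (Fin n) ℝ}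

lemma qf_mulVec_of_lyapunov (hLyap : Mᵀ * Pb * M - Pb = -Qb) (z : Fin n → ℝ) :
    qf Pb (M *ᵥ z) = qf Pb z - qf Qb z := by
  have hM : Mᵀ * Pb * M = Pb - Qb := by rw [sub_eq_add_neg Pb, ← hLyap]; abel
  rw [← qf_transpose_mul_mul, hM, qf_sub]

lemma qf_mulVec_le_of_lyapunov_s4 (hLyap : Mᵀ * Pb * M - Pb = -Qb) (hQb : Qb.PosSemidef)
    (z : Fin n → ℝ) : qf Pb (M *ᵥ z) ≤ qf Pb z := by
  linarith [qf_mulVec_of_lyapunov hLyap z, hQb.qf_nonneg z]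

lemma qf_mulVec_le_lamParam_mul [Nonempty (Fin n)] (hLyap : Mᵀ * Pb * M - Pb = -Qb)
    (hQb : Qb.PosDef) (hPb : Pb.PosDef) (z : Fin n → ℝ) :
    qf Pb (M *ᵥ z) ≤ lamParam Qb Pb * qf Pb z := by
  have hpM := lamMax_pos hPb
  have hQb_lower : lamMin Qb / lamMax Pb * qf Pb z ≤ qf Qb z :=
    calc lamMin Qb / lamMax Pb * qf Pb z
        ≤ lamMin Qb / lamMax Pb * (lamMax Pb * (z ⬝ᵥ z)) :=
          mul_le_mul_of_nonneg_left (qf_le_lamMax_mul hPb.1 z)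
            (div_nonneg (lamMin_pos hQb).le hpM.le)
      _ = lamMin Qb * (z ⬝ᵥ z) := by field_simp
      _ ≤ qf Qb z := lamMin_mul_le_qf hQb.1 z
  rw [qf_mulVec_of_lyapunov hLyap, lamParam]
  linarith

lemma lamParam_nonneg [Nonempty (Fin n)] (hLyap : Mᵀ * Pb * M - Pb = -Qb)
    (hQb : Qb.PosDef) (hPb : Pb.PosDef) : 0 ≤ lamParam Qb Pb := by
  obtain ⟨z, hz⟩ := exists_ne (0 : Fin n → ℝ)
  refine nonneg_of_mul_nonneg_left ?_ (hPb.qf_pos hz)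
  exact (hPb.posSemidef.qf_nonneg _).trans (qf_mulVec_le_lamParam_mul hLyap hQb hPb z)

lemma lamParam_lt_one [Nonempty (Fin n)] (hQb : Qb.PosDef) (hPb : Pb.PosDef) :
    lamParam Qb Pb < 1 := by
  rw [lamParam, sub_lt_self_iff]
  exact div_pos (lamMin_pos hQb) (lamMax_pos hPb)

lemma qf_pow_mulVec_le {r : ℝ} (hr : 0 ≤ r) (hstep : ∀ z, qf Pb (M *ᵥ z) ≤ r * qf Pb z)
    (x : Fin n → ℝ) (τ : ℕ) : qf Pb (M ^ τ *ᵥ x) ≤ r ^ τ * qf Pb x := by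
  induction τ with
  | zero => simp
  | succ τ ih =>
    calc qf Pb (M ^ (τ + 1) *ᵥ x) = qf Pb (M *ᵥ (M ^ τ *ᵥ x)) := by
          rw [pow_succ', ← mulVec_mulVec]
      _ ≤ r * (r ^ τ * qf Pb x) := (hstep _).trans (mul_le_mul_of_nonneg_left ih hr)
      _ = r ^ (τ + 1) * qf Pb x := by ring

lemma dotProduct_self_pow_mulVec_le [Nonempty (Fin n)] (hLyap : Mᵀ * Pb * M - Pb = -Qb)
    (hQb : Qb.PosDef) (hPb : Pb.PosDef) (x : Fin n → ℝ) (τ : ℕ) :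
    (M ^ τ *ᵥ x) ⬝ᵥ (M ^ τ *ᵥ x) ≤
      lamMax Pb / lamMin Pb * lamParam Qb Pb ^ τ * (x ⬝ᵥ x) := by
  have hr := lamParam_nonneg hLyap hQb hPb
  have hW : qf Pb (M ^ τ *ᵥ x) ≤ lamParam Qb Pb ^ τ * (lamMax Pb * (x ⬝ᵥ x)) :=
    (qf_pow_mulVec_le hr (qf_mulVec_le_lamParam_mul hLyap hQb hPb) x τ).trans
      (mul_le_mul_of_nonneg_left (qf_le_lamMax_mul hPb.1 x) (pow_nonneg hr τ))
  calc (M ^ τ *ᵥ x) ⬝ᵥ (M ^ τ *ᵥ x) ≤ qf Pb (M ^ τ *ᵥ x) / lamMin Pb :=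
        dotProduct_self_le_qf_div_lamMin hPb _
    _ ≤ lamParam Qb Pb ^ τ * (lamMax Pb * (x ⬝ᵥ x)) / lamMin Pb :=
        div_le_div_of_nonneg_right hW (lamMin_pos hPb).le
    _ = lamMax Pb / lamMin Pb * lamParam Qb Pb ^ τ * (x ⬝ᵥ x) := by ring

end Lyapunov

section FiniteHorizon

variable {n m : ℕ} {A : Matrix (Fin n) (Fin n) ℝ} {B : Matrix (Fin n) (Fin m) ℝ}
  {P : Matrix (Fin n) (Fin n) ℝ} {Q : Matrix (Fin m) (Fin m) ℝ}

def feedbackControl (A : Matrix (Fin n) (Fin n) ℝ) (B : Matrix (Fin n) (Fin m) ℝ)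
    (K : Matrix (Fin m) (Fin n) ℝ) (x : Fin n → ℝ) : ℕ → Fin m → ℝ :=
  fun τ ↦ K *ᵥ ((A + B * K) ^ τ *ᵥ x)

lemma traj_zero (x : Fin n → ℝ) (u : ℕ → Fin m → ℝ) : traj A B x u 0 = x := rfl

lemma traj_feedbackControl (K : Matrix (Fin m) (Fin n) ℝ) (x : Fin n → ℝ) (τ : ℕ) :
    traj A B x (feedbackControl A B K x) τ = (A + B * K) ^ τ *ᵥ x := by
  induction τ with
  | zero => simp [traj_zero]
  | succ τ ih =>
    rw [traj, ih, feedbackControl, pow_succ', ← mulVec_mulVec, add_mulVec, ← mulVec_mulVec]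

lemma feasible_feedbackControl {K : Matrix (Fin m) (Fin n) ℝ} {Pb Qb : Matrix (Fin n) (Fin n) ℝ}
    (hLyap : (A + B * K)ᵀ * Pb * (A + B * K) - Pb = -Qb) (hQb : Qb.PosSemidef) {c : ℝ}
    {X0 X : Set (Fin n → ℝ)} {U : Set (Fin m → ℝ)} (hX0 : X0 = {x | qf Pb x ≤ c})
    (hX0X : X0 ⊆ X) (hKU : ∀ x ∈ X, K *ᵥ x ∈ U) (N : ℕ) {x : Fin n → ℝ} (hx : x ∈ X0) :
    Feasible A B X0 U N x (feedbackControl A B K x) := by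
  have hinv : ∀ τ, (A + B * K) ^ τ *ᵥ x ∈ X0 := by
    subst hX0
    intro τ
    have hW := qf_pow_mulVec_le zero_le_one
      (fun z ↦ by simpa using qf_mulVec_le_of_lyapunov_s4 hLyap hQb z) x τ
    rw [one_pow, one_mul] at hW
    exact hW.trans hx
  refine ⟨fun τ _ ↦ hKU _ (hX0X (hinv τ)), fun τ _ ↦ ?_⟩
  rw [traj_feedbackControl]
  exact hinv (τ + 1)

lemma cost_nonneg (hP : P.PosSemidef) (hQ : Q.PosSemidef) (N : ℕ) (x : Fin n → ℝ)
    (u : ℕ → Fin m → ℝ) : 0 ≤ cost A B P Q N x u :=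
  add_nonneg (Finset.sum_nonneg fun _ _ ↦ add_nonneg (hP.qf_nonneg _) (hQ.qf_nonneg _))
    (hP.qf_nonneg _)

lemma qf_le_cost (hP : P.PosSemidef) (hQ : Q.PosSemidef) {N : ℕ} (hN : 1 ≤ N) (x : Fin n → ℝ)
    (u : ℕ → Fin m → ℝ) : qf P x ≤ cost A B P Q N x u := by
  obtain ⟨N, rfl⟩ := Nat.exists_eq_add_of_le' hN
  rw [cost, Finset.sum_range_succ', traj_zero]
  have := Finset.sum_nonneg fun τ (_ : τ ∈ range N) ↦
    add_nonneg (hP.qf_nonneg (traj A B x u (τ + 1))) (hQ.qf_nonneg (u (τ + 1)))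
  linarith [hQ.qf_nonneg (u 0), hP.qf_nonneg (traj A B x u (N + 1))]

lemma cost_le_sum_range_succ (hQ : Q.PosSemidef) (N : ℕ) (x : Fin n → ℝ) (u : ℕ → Fin m → ℝ) :
    cost A B P Q N x u ≤ ∑ τ ∈ range (N + 1), (qf P (traj A B x u τ) + qf Q (u τ)) := by
  rw [cost, Finset.sum_range_succ]
  linarith [hQ.qf_nonneg (u N)]

lemma cost_feedbackControl_le {K : Matrix (Fin m) (Fin n) ℝ} {Pb Qb : Matrix (Fin n) (Fin n) ℝ}
    (hLyap : (A + B * K)ᵀ * Pb * (A + B * K) - Pb = -Qb) (hQb : Qb.PosDef) (hPb : Pb.PosDef)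
    (hP : P.PosSemidef) (hQ : Q.PosSemidef) (N : ℕ) (x : Fin n → ℝ) :
    cost A B P Q N x (feedbackControl A B K x) ≤ phi Qb Pb P Q K N * (x ⬝ᵥ x) := by
  -- for `n = 0` the constants degenerate (`λ_min(P̄) = 0`, `λ = 1`), hence the case `x = 0` first
  rcases eq_or_ne x 0 with rfl | hx
  · simp [cost, traj_feedbackControl, feedbackControl, qf]
  obtain ⟨i, -⟩ := Function.ne_iff.mp hx
  have : Nonempty (Fin n) := ⟨i⟩
  set a := lamMax (P + Kᵀ * Q * K)
  set r := lamParam Qb Pb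
  set ρ := lamMax Pb / lamMin Pb
  have ha : 0 ≤ a := lamMax_nonneg (hP.add (hQ.conjTranspose_mul_mul_same K))
  have hstage : ∀ τ, qf P (traj A B x (feedbackControl A B K x) τ) +
      qf Q (feedbackControl A B K x τ) ≤ a * ρ * (x ⬝ᵥ x) * r ^ τ := by
    intro τ
    rw [traj_feedbackControl, feedbackControl, ← qf_transpose_mul_mul Q K, ← qf_add]
    calc qf (P + Kᵀ * Q * K) ((A + B * K) ^ τ *ᵥ x)
        ≤ a * (((A + B * K) ^ τ *ᵥ x) ⬝ᵥ ((A + B * K) ^ τ *ᵥ x)) :=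
          qf_le_lamMax_mul (hP.add (hQ.conjTranspose_mul_mul_same K)).1 _
      _ ≤ a * (ρ * r ^ τ * (x ⬝ᵥ x)) :=
          mul_le_mul_of_nonneg_left (dotProduct_self_pow_mulVec_le hLyap hQb hPb x τ) ha
      _ = a * ρ * (x ⬝ᵥ x) * r ^ τ := by ring
  have hgeom : ∑ τ ∈ range (N + 1), r ^ τ = (1 - r ^ (N + 1)) / (1 - r) := by
    rw [geom_sum_eq (lamParam_lt_one hQb hPb).ne, ← neg_div_neg_eq, neg_sub, neg_sub]
  calc cost A B P Q N x (feedbackControl A B K x)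
      ≤ ∑ τ ∈ range (N + 1), a * ρ * (x ⬝ᵥ x) * r ^ τ :=
        (cost_le_sum_range_succ hQ N x _).trans (Finset.sum_le_sum fun τ _ ↦ hstage τ)
    _ = phi Qb Pb P Q K N * (x ⬝ᵥ x) := by
        rw [← Finset.mul_sum, hgeom, phi]
        ring

lemma Vopt_le_cost (hP : P.PosSemidef) (hQ : Q.PosSemidef) {X0 : Set (Fin n → ℝ)}
    {U : Set (Fin m → ℝ)} {N : ℕ} {x : Fin n → ℝ} {u : ℕ → Fin m → ℝ}
    (hu : Feasible A B X0 U N x u) : Vopt A B P Q X0 U N x ≤ cost A B P Q N x u :=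
  csInf_le ⟨0, by rintro _ ⟨v, -, rfl⟩; exact cost_nonneg hP hQ N x v⟩ ⟨u, hu, rfl⟩

lemma lamMin_mul_le_Vopt (hP : P.PosSemidef) (hQ : Q.PosSemidef) {X0 : Set (Fin n → ℝ)}
    {U : Set (Fin m → ℝ)} {N : ℕ} (hN : 1 ≤ N) {x : Fin n → ℝ}
    (hne : ∃ u, Feasible A B X0 U N x u) : lamMin P * (x ⬝ᵥ x) ≤ Vopt A B P Q X0 U N x := by
  obtain ⟨u, hu⟩ := hne
  refine le_csInf ⟨_, u, hu, rfl⟩ ?_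
  rintro _ ⟨v, -, rfl⟩
  exact (lamMin_mul_le_qf hP.1 x).trans (qf_le_cost hP hQ hN x v)

end FiniteHorizon

theorem stmt4_general {n m : ℕ}
    (A : Matrix (Fin n) (Fin n) ℝ) (B : Matrix (Fin n) (Fin m) ℝ)
    (K : Matrix (Fin m) (Fin n) ℝ) (Qb Pb : Matrix (Fin n) (Fin n) ℝ)
    (hQb : Qb.PosDef) (hPb : Pb.PosDef)
    (hLyap : (A + B * K)ᵀ * Pb * (A + B * K) - Pb = -Qb)
    (c : ℝ)
    (X0 : Set (Fin n → ℝ)) (hX0 : X0 = {x : Fin n → ℝ | qf Pb x ≤ c})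
    (X : Set (Fin n → ℝ)) (U : Set (Fin m → ℝ))
    (hX0X : X0 ⊆ X) (hKU : ∀ x ∈ X, K *ᵥ x ∈ U)
    (P : Matrix (Fin n) (Fin n) ℝ) (Q : Matrix (Fin m) (Fin m) ℝ)
    (hP : P.PosDef) (hQ : Q.PosDef)
    :
    ∀ N : ℕ, 1 ≤ N → ∀ x ∈ X0,
      lamMin P * (x ⬝ᵥ x) ≤ Vopt A B P Q X0 U N x ∧
      Vopt A B P Q X0 U N x ≤ phi Qb Pb P Q K N * (x ⬝ᵥ x) := by
  intro N hN x hx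
  have hfeas := feasible_feedbackControl hLyap hQb.posSemidef hX0 hX0X hKU N hx
  exact ⟨lamMin_mul_le_Vopt hP.posSemidef hQ.posSemidef hN ⟨_, hfeas⟩,
    (Vopt_le_cost hP.posSemidef hQ.posSemidef hfeas).trans
      (cost_feedbackControl_le hLyap hQb hPb hP.posSemidef hQ.posSemidef N x)⟩

/-- Positive-definite and decrescent properties of V_N: for every `N ≥ 1`
and `x ∈ X₀`, `λ_min(P)·‖x‖² ≤ V_N(x) ≤ φ_N·‖x‖²`. -/
theorem stmt4 {n m : ℕ}
    (A : Matrix (Fin n) (Fin n) ℝ) (B : Matrix (Fin n) (Fin m) ℝ)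
    (K : Matrix (Fin m) (Fin n) ℝ) (Qb Pb : Matrix (Fin n) (Fin n) ℝ)
    (hQb : Qb.PosDef) (hPb : Pb.PosDef)
    (hLyap : (A + B * K)ᵀ * Pb * (A + B * K) - Pb = -Qb)
    (c : ℝ) (hc : 0 < c)
    (X0 : Set (Fin n → ℝ)) (hX0 : X0 = {x : Fin n → ℝ | qf Pb x ≤ c})
    (X : Set (Fin n → ℝ)) (U : Set (Fin m → ℝ))
    (hX : Convex ℝ X) (hU : Convex ℝ U)
    (h0X : (0 : Fin n → ℝ) ∈ X) (h0U : (0 : Fin m → ℝ) ∈ U)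
    (hX0X : X0 ⊆ X) (hKU : ∀ x ∈ X, K *ᵥ x ∈ U)
    (P : Matrix (Fin n) (Fin n) ℝ) (Q : Matrix (Fin m) (Fin m) ℝ)
    (hP : P.PosDef) (hQ : Q.PosDef)
    :
    ∀ N : ℕ, 1 ≤ N → ∀ x ∈ X0,
      lamMin P * (x ⬝ᵥ x) ≤ Vopt A B P Q X0 U N x ∧
      Vopt A B P Q X0 U N x ≤ phi Qb Pb P Q K N * (x ⬝ᵥ x) :=
  stmt4_general A B K Qb Pb hQb hPb hLyap c X0 hX0 X U hX0X hKU P Q hP hQ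
end
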